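/- Let f_1, …, f_n : ℝ^d → ℝ each be convex and differentiable with L_max-Lipschitz gradient, let f(x) = (1/n)∑_{i=1}^n f_i(x) be μ-strongly convex with minimizer x⋆ satisfying ∇f(x⋆) = 0, let x ∈ ℝ^d and γ > 0. Then the SGD⋆ update satisfies (1/n)∑_{i=1}^n ‖x − γ(∇f_i(x) − ∇f_i(x⋆)) − x⋆‖² ≤ (1 − μγ)‖x − x⋆‖² + 2γ(γ L_max − 1)(f(x) − f(x⋆)). -/

import Mathlib

open scoped BigOperators RealInnerProductSpace


variable {E : Type*} [NormedAddCommGroup E] [InnerProductSpace ℝ E] [CompleteSpace E]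

/-- Directional derivative via gradient. -/
lemma hasDerivAt_line {f : E → ℝ} (hf : Differentiable ℝ f) (x v : E) (t : ℝ) :
    HasDerivAt (fun s : ℝ => f (x + s • v)) ⟪gradient f (x + t • v), v⟫ t := by
  have h1 : HasFDerivAt f (fderiv ℝ f (x + t • v)) (x + t • v) := (hf _).hasFDerivAt
  have h2 : HasDerivAt (fun s : ℝ => x + s • v) v t := by
    simpa using ((hasDerivAt_id t).smul_const v).const_add x
  have := h1.comp_hasDerivAt t h2
  refine this.congr_deriv ?_
  have : HasGradientAt f (gradient f (x + t • v)) (x + t • v) := (hf _).hasGradientAt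
  rw [hasGradientAt_iff_hasFDerivAt] at this
  rw [this.fderiv]
  simp [real_inner_comm]

/-- First-order condition for convex differentiable functions. -/
lemma convex_first_order {f : E → ℝ} (hc : ConvexOn ℝ Set.univ f)
    (hf : Differentiable ℝ f) (x y : E) :
    f x + ⟪gradient f x, y - x⟫ ≤ f y := by
  rcases eq_or_ne x y with rfl | hxy
  · simp
  set φ : ℝ → ℝ := fun t => f (x + t • (y - x)) with hφ
  have hφc : ConvexOn ℝ Set.univ φ := by
    have := hc.comp_affineMap (AffineMap.lineMap x y : ℝ →ᵃ[ℝ] E)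
    refine ConvexOn.congr (this.subset (Set.subset_univ _) convex_univ) ?_
    intro t _
    simp only [φ, Function.comp_apply, AffineMap.lineMap_apply_module]
    congr 1
    module
  have hd : HasDerivAt φ ⟪gradient f x, y - x⟫ 0 := by
    have := hasDerivAt_line hf x (y - x) 0
    simpa using this
  have hs := hφc.le_slope_of_hasDerivAt (Set.mem_univ 0) (Set.mem_univ 1) one_pos hd
  rw [slope_def_field] at hs
  simp only [φ] at hs
  simp only [zero_smul, add_zero, one_smul] at hs
  have hy : x + (y - x) = y := by abel
  rw [hy] at hs
  have : (f y - f x) / (1 - 0) = f y - f x := by norm_num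
  rw [this] at hs
  linarith

/-- Descent lemma: L-smooth functions are bounded above by quadratic. -/
lemma descent_lemma {f : E → ℝ} {L : ℝ} (hf : Differentiable ℝ f)
    (hlip : ∀ a b, ‖gradient f a - gradient f b‖ ≤ L * ‖a - b‖) (x y : E) :
    f y ≤ f x + ⟪gradient f x, y - x⟫ + L / 2 * ‖y - x‖ ^ 2 := by
  set v := y - x with hv
  set c := ⟪gradient f x, v⟫ with hc
  set h : ℝ → ℝ := fun t => f (x + t • v) - t * c - L / 2 * t ^ 2 * ‖v‖ ^ 2 with hh
  have hder : ∀ t : ℝ, HasDerivAt h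
      (⟪gradient f (x + t • v), v⟫ - c - L * t * ‖v‖ ^ 2) t := by
    intro t
    have h1 := hasDerivAt_line hf x v t
    have h2 : HasDerivAt (fun t : ℝ => t * c) c t := by simpa using (hasDerivAt_id t).mul_const c
    have h3 : HasDerivAt (fun t : ℝ => L / 2 * t ^ 2 * ‖v‖ ^ 2) (L * t * ‖v‖ ^ 2) t := by
      have : HasDerivAt (fun t : ℝ => t ^ 2) (2 * t) t := by
        simpa using hasDerivAt_pow 2 t
      have := ((this.const_mul (L / 2)).mul_const (‖v‖ ^ 2))
      exact this.congr_deriv (by ring)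
    exact (h1.sub h2).sub h3
  have hmono : AntitoneOn h (Set.Icc 0 1) := by
    apply antitoneOn_of_deriv_nonpos (convex_Icc 0 1)
    · exact Continuous.continuousOn (by
        have : Continuous h := by
          have : ∀ t, DifferentiableAt ℝ h t := fun t => (hder t).differentiableAt
          exact Differentiable.continuous this
        exact this)
    · intro t _
      exact (hder t).differentiableAt.differentiableWithinAt
    · intro t ht
      rw [interior_Icc] at ht
      rw [(hder t).deriv]
      have hb : ⟪gradient f (x + t • v), v⟫ - c ≤ L * t * ‖v‖ ^ 2 := by
        have h1 : ⟪gradient f (x + t • v) - gradient f x, v⟫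
            ≤ ‖gradient f (x + t • v) - gradient f x‖ * ‖v‖ :=
          real_inner_le_norm _ _
        have h2 : ‖gradient f (x + t • v) - gradient f x‖ ≤ L * (t * ‖v‖) := by
          have := hlip (x + t • v) x
          simpa [norm_smul, abs_of_pos ht.1, mul_assoc] using this
        have h3 : ⟪gradient f (x + t • v) - gradient f x, v⟫
            ≤ L * (t * ‖v‖) * ‖v‖ := by
          calc _ ≤ ‖gradient f (x + t • v) - gradient f x‖ * ‖v‖ := h1
          _ ≤ L * (t * ‖v‖) * ‖v‖ := by
              apply mul_le_mul_of_nonneg_right h2 (norm_nonneg _)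
        rw [inner_sub_left] at h3
        nlinarith [h3]
      linarith
  have := hmono (Set.left_mem_Icc.2 zero_le_one) (Set.right_mem_Icc.2 zero_le_one) zero_le_one
  simp only [hh] at this
  simp only [zero_smul, add_zero, one_smul, zero_mul, sub_zero, one_pow, mul_one] at this
  have hy : x + v = y := by simp [hv]
  rw [hy] at this
  nlinarith [this]

lemma hasGradientAt_inner_const (b z : E) :
    HasGradientAt (fun w => ⟪b, w⟫) b z := by
  rw [hasGradientAt_iff_hasFDerivAt]
  have : HasFDerivAt (fun w : E => ⟪b, w⟫) (innerSL ℝ b) z := (innerSL ℝ b).hasFDerivAt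
  exact this

lemma gradient_sub_inner {f : E → ℝ} (hf : Differentiable ℝ f) (b z : E) :
    gradient (fun w => f w - ⟪b, w⟫) z = gradient f z - b := by
  have h1 : HasGradientAt f (gradient f z) z := (hf z).hasGradientAt
  have h2 := hasGradientAt_inner_const b z
  rw [hasGradientAt_iff_hasFDerivAt] at h1 h2
  have h3 : HasGradientAt (fun w => f w - ⟪b, w⟫) (gradient f z - b) z := by
    rw [hasGradientAt_iff_hasFDerivAt, map_sub]
    exact h1.sub h2
  exact h3.gradient

lemma hasGradientAt_norm_sq (z : E) :
    HasGradientAt (fun w : E => ‖w‖ ^ 2) ((2 : ℝ) • z) z := by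
  rw [hasGradientAt_iff_hasFDerivAt]
  have h : HasFDerivAt (fun w : E => ⟪w, w⟫) ((innerSL ℝ z) + (innerSL ℝ z)) z := by
    have := (hasFDerivAt_id z).inner ℝ (hasFDerivAt_id z)
    refine this.congr_fderiv ?_
    ext w
    simp [real_inner_comm]
  have h2 : HasFDerivAt (fun w : E => ‖w‖ ^ 2) ((innerSL ℝ z) + (innerSL ℝ z)) z := by
    simpa only [real_inner_self_eq_norm_sq] using h
  refine h2.congr_fderiv ?_
  ext w
  simp [InnerProductSpace.toDual, inner_smul_left, two_mul]

/-- Cocoercivity-type bound for convex L-smooth functions. -/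
lemma smooth_convex_bregman {f : E → ℝ} {L : ℝ} (hL : 0 < L)
    (hc : ConvexOn ℝ Set.univ f) (hf : Differentiable ℝ f)
    (hlip : ∀ a b, ‖gradient f a - gradient f b‖ ≤ L * ‖a - b‖) (x y : E) :
    ‖gradient f x - gradient f y‖ ^ 2
      ≤ 2 * L * (f x - f y - ⟪gradient f y, x - y⟫) := by
  set b := gradient f y with hb
  set φ : E → ℝ := fun w => f w - ⟪b, w⟫ with hφ
  have hφd : Differentiable ℝ φ := by
    apply hf.sub
    exact fun z => ((hasGradientAt_inner_const b z).hasFDerivAt).differentiableAt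
  have hφg : ∀ z, gradient φ z = gradient f z - b := fun z => gradient_sub_inner hf b z
  have hφlip : ∀ a c, ‖gradient φ a - gradient φ c‖ ≤ L * ‖a - c‖ := by
    intro a c; rw [hφg, hφg]; simpa using hlip a c
  -- φ is minimized at y
  have hmin : ∀ z, φ y ≤ φ z := by
    intro z
    have := convex_first_order hc hf y z
    simp only [hφ]
    have hi : ⟪b, z⟫ - ⟪b, y⟫ = ⟪b, z - y⟫ := by rw [inner_sub_right]
    linarith [this, hi.le, hi.ge]
  set g := gradient f x - b with hg
  set z := x - (1 / L) • g with hz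
  have hd := descent_lemma hφd hφlip x z
  have h1 : z - x = -((1 / L) • g) := by simp [hz]
  have h2 : ⟪gradient φ x, z - x⟫ = -(1 / L) * ‖g‖ ^ 2 := by
    rw [hφg, ← hg, h1]
    rw [inner_neg_right, real_inner_smul_right, real_inner_self_eq_norm_sq]
    ring
  have h3 : ‖z - x‖ ^ 2 = (1 / L) ^ 2 * ‖g‖ ^ 2 := by
    rw [h1, norm_neg, norm_smul, Real.norm_eq_abs, abs_of_pos (by positivity : (0:ℝ) < 1 / L)]
    ring
  have h4 : φ y ≤ φ x - 1 / (2 * L) * ‖g‖ ^ 2 := by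
    have := hmin z
    rw [h2, h3] at hd
    have hL' : L ≠ 0 := ne_of_gt hL
    have : φ y ≤ φ x + -(1 / L) * ‖g‖ ^ 2 + L / 2 * ((1 / L) ^ 2 * ‖g‖ ^ 2) :=
      le_trans (hmin z) hd
    have he : φ x + -(1 / L) * ‖g‖ ^ 2 + L / 2 * ((1 / L) ^ 2 * ‖g‖ ^ 2)
        = φ x - 1 / (2 * L) * ‖g‖ ^ 2 := by field_simp; ring
    linarith [he.le, he.ge]
  have h5 : φ x - φ y = f x - f y - ⟪b, x - y⟫ := by
    simp only [hφ, inner_sub_right]; ring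
  have h6 : 1 / (2 * L) * ‖g‖ ^ 2 ≤ f x - f y - ⟪b, x - y⟫ := by
    rw [← h5]; linarith [h4]
  calc ‖g‖ ^ 2 = 2 * L * (1 / (2 * L) * ‖g‖ ^ 2) := by field_simp
  _ ≤ 2 * L * (f x - f y - ⟪b, x - y⟫) := by
      apply mul_le_mul_of_nonneg_left h6 (by positivity)

/-- First-order strong convexity bound. -/
lemma strong_convex_lower {F : E → ℝ} {mu : ℝ} (hFd : Differentiable ℝ F)
    (hsc : ConvexOn ℝ Set.univ (fun z => F z - mu / 2 * ‖z‖ ^ 2)) (x y : E) :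
    F x + ⟪gradient F x, y - x⟫ + mu / 2 * ‖y - x‖ ^ 2 ≤ F y := by
  set G : E → ℝ := fun z => F z - mu / 2 * ‖z‖ ^ 2 with hG
  have hq : ∀ z : E, HasFDerivAt (fun w : E => mu / 2 * ‖w‖ ^ 2)
      ((InnerProductSpace.toDual ℝ E) (mu • z)) z := by
    intro z
    have h1 : HasFDerivAt (fun w : E => ‖w‖ ^ 2)
        ((InnerProductSpace.toDual ℝ E) ((2:ℝ) • z)) z := hasGradientAt_norm_sq z
    have := h1.const_mul (mu / 2)
    refine this.congr_fderiv ?_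
    rw [← map_smul]
    congr 1
    rw [smul_smul]
    congr 1
    ring
  have hGd : Differentiable ℝ G := hFd.sub (fun z => (hq z).differentiableAt)
  have hGg : ∀ z, gradient G z = gradient F z - mu • z := by
    intro z
    have h1 : HasFDerivAt F ((InnerProductSpace.toDual ℝ E) (gradient F z)) z :=
      (hFd z).hasGradientAt
    have h3 : HasGradientAt G (gradient F z - mu • z) z := by
      rw [hasGradientAt_iff_hasFDerivAt, map_sub]
      exact h1.sub (hq z)
    exact h3.gradient
  have h := convex_first_order hsc hGd x y
  rw [hGg] at h
  simp only [hG] at h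
  rw [inner_sub_left, real_inner_smul_left] at h
  have hnorm : ‖y - x‖ ^ 2 = ‖y‖ ^ 2 - 2 * ⟪x, y⟫ + ‖x‖ ^ 2 := by
    rw [norm_sub_sq_real, real_inner_comm]
  have hxy : ⟪x, y - x⟫ = ⟪x, y⟫ - ‖x‖ ^ 2 := by
    rw [inner_sub_right, real_inner_self_eq_norm_sq]
  rw [hxy] at h
  rw [hnorm]
  linarith [h]

set_option maxHeartbeats 1000000 in
/-- One-step SGD⋆ bound combining strong convexity and expected smoothness:
`(1/n)∑ ‖x − γ(∇f_i(x) − ∇f_i(x⋆)) − x⋆‖²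
  ≤ (1 − μγ)‖x − x⋆‖² + 2γ(γ L_max − 1)(f(x) − f(x⋆))`. -/
theorem sgd_star_one_step_bound
    {d n : ℕ} (hn : 0 < n)
    (f : Fin n → EuclideanSpace ℝ (Fin d) → ℝ)
    (Lmax mu : ℝ) (hmu : 0 < mu)
    (hconv : ∀ i, ConvexOn ℝ Set.univ (f i))
    (hdiff : ∀ i, Differentiable ℝ (f i))
    (hlip : ∀ i x y, ‖gradient (f i) x - gradient (f i) y‖ ≤ Lmax * ‖x - y‖)
    (F : EuclideanSpace ℝ (Fin d) → ℝ)
    (hF : ∀ x, F x = (1 / (n : ℝ)) * ∑ i, f i x)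
    (hsc : ConvexOn ℝ Set.univ (fun x => F x - (mu / 2) * ‖x‖ ^ 2))
    (xstar : EuclideanSpace ℝ (Fin d))
    (hmin : ∀ y, F xstar ≤ F y)
    (hstar : gradient F xstar = 0)
    (x : EuclideanSpace ℝ (Fin d))
    (gamma : ℝ) (hgamma : 0 < gamma) :
    (1 / (n : ℝ)) * ∑ i,
        ‖x - gamma • (gradient (f i) x - gradient (f i) xstar) - xstar‖ ^ 2
      ≤ (1 - mu * gamma) * ‖x - xstar‖ ^ 2
        + 2 * gamma * (gamma * Lmax - 1) * (F x - F xstar) := by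
  classical
  by_cases hxx : x = xstar
  · subst hxx
    simp
  have hnR : (0:ℝ) < n := by exact_mod_cast hn
  have hnne : (n:ℝ) ≠ 0 := ne_of_gt hnR
  have hFe : F = fun z => (1/(n:ℝ)) * ∑ i, f i z := funext hF
  have hFd : Differentiable ℝ F := by
    rw [hFe]
    exact Differentiable.const_mul (Differentiable.fun_sum fun i _ => hdiff i) _
  have hgradF : ∀ z, gradient F z = (1/(n:ℝ)) • ∑ i, gradient (f i) z := by
    intro z
    have h : HasGradientAt F ((1/(n:ℝ)) • ∑ i, gradient (f i) z) z := by
      rw [hasGradientAt_iff_hasFDerivAt, map_smul, map_sum]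
      have hsum : HasFDerivAt (fun w => ∑ i, f i w)
          (∑ i, (InnerProductSpace.toDual ℝ _) (gradient (f i) z)) z :=
        HasFDerivAt.fun_sum fun i _ =>
          ((hdiff i z).hasGradientAt : HasGradientAt _ _ _)
      have := hsum.const_mul (1/(n:ℝ))
      rw [hFe]
      exact this
    exact h.gradient
  have hstar' : ∑ i, gradient (f i) xstar = 0 := by
    have h := (hgradF xstar).symm
    rw [hstar, smul_eq_zero] at h
    rcases h with h | h
    · exact absurd h (by positivity)
    · exact h
  set g : Fin n → EuclideanSpace ℝ (Fin d) :=
    fun i => gradient (f i) x - gradient (f i) xstar with hgdef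
  have hsumg : ∑ i, g i = (n:ℝ) • gradient F x := by
    rw [hgradF x, smul_smul, mul_one_div_cancel hnne, one_smul]
    simp only [hgdef]
    rw [Finset.sum_sub_distrib, hstar', sub_zero]
  have hinner : ⟪x - xstar, ∑ i, g i⟫ = (n:ℝ) * ⟪x - xstar, gradient F x⟫ := by
    rw [hsumg, real_inner_smul_right]
  have e1 : ∀ i, ‖x - gamma • g i - xstar‖ ^ 2
      = ‖x - xstar‖ ^ 2 - 2 * gamma * ⟪x - xstar, g i⟫ + gamma ^ 2 * ‖g i‖ ^ 2 := by
    intro i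
    have hrw : x - gamma • g i - xstar = (x - xstar) - gamma • g i := by abel
    rw [hrw, norm_sub_sq_real, real_inner_smul_right, norm_smul, mul_pow,
      Real.norm_eq_abs, sq_abs]
    ring
  have sum1 : ∑ i, ‖x - gamma • g i - xstar‖ ^ 2
      = (n:ℝ) * ‖x - xstar‖ ^ 2 - 2 * gamma * ((n:ℝ) * ⟪x - xstar, gradient F x⟫)
        + gamma ^ 2 * ∑ i, ‖g i‖ ^ 2 := by
    calc ∑ i, ‖x - gamma • g i - xstar‖ ^ 2
        = ∑ i, (‖x - xstar‖ ^ 2 - 2 * gamma * ⟪x - xstar, g i⟫ + gamma ^ 2 * ‖g i‖ ^ 2) :=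
          Finset.sum_congr rfl fun i _ => e1 i
      _ = _ := by
          rw [Finset.sum_add_distrib, Finset.sum_sub_distrib, Finset.sum_const,
            ← Finset.mul_sum, ← Finset.mul_sum, ← inner_sum, hinner]
          simp [Finset.card_univ, nsmul_eq_mul]
  have key : (1/(n:ℝ)) * ∑ i, ‖x - gamma • g i - xstar‖ ^ 2
      = ‖x - xstar‖ ^ 2 - 2 * gamma * ⟪x - xstar, gradient F x⟫
        + gamma ^ 2 * ((1/(n:ℝ)) * ∑ i, ‖g i‖ ^ 2) := by
    rw [sum1]; field_simp
  have hA : F x - F xstar + mu / 2 * ‖x - xstar‖ ^ 2 ≤ ⟪x - xstar, gradient F x⟫ := by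
    have h := strong_convex_lower hFd hsc x xstar
    have h1 : ⟪gradient F x, xstar - x⟫ = -⟪x - xstar, gradient F x⟫ := by
      rw [show xstar - x = -(x - xstar) by abel, inner_neg_right, real_inner_comm]
    rw [h1, norm_sub_rev] at h
    linarith
  have hLnn : 0 ≤ Lmax := by
    have h := hlip ⟨0, hn⟩ x xstar
    have hpos : 0 < ‖x - xstar‖ := norm_pos_iff.2 (sub_ne_zero.2 hxx)
    nlinarith [norm_nonneg (gradient (f ⟨0, hn⟩) x - gradient (f ⟨0, hn⟩) xstar)]
  have hbreg : ∀ i, ‖g i‖ ^ 2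
      ≤ 2 * Lmax * (f i x - f i xstar - ⟪gradient (f i) xstar, x - xstar⟫) := by
    intro i
    rcases eq_or_lt_of_le hLnn with hL0 | hLpos
    · have hgz : g i = 0 := by
        have h := hlip i x xstar
        rw [← hL0, zero_mul] at h
        exact norm_le_zero_iff.1 h
      have hfo := convex_first_order (hconv i) (hdiff i) xstar x
      rw [hgz, ← hL0]
      simp only [norm_zero, zero_pow, mul_zero, zero_mul]
      norm_num
    · exact smooth_convex_bregman hLpos (hconv i) (hdiff i) (hlip i) x xstar
  have hQ : (1/(n:ℝ)) * ∑ i, ‖g i‖ ^ 2 ≤ 2 * Lmax * (F x - F xstar) := by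
    have hs : ∑ i, ‖g i‖ ^ 2
        ≤ ∑ i, 2 * Lmax * (f i x - f i xstar - ⟪gradient (f i) xstar, x - xstar⟫) :=
      Finset.sum_le_sum fun i _ => hbreg i
    have h2 : ∑ i, 2 * Lmax * (f i x - f i xstar - ⟪gradient (f i) xstar, x - xstar⟫)
        = 2 * Lmax * (∑ i, f i x - ∑ i, f i xstar
          - ⟪∑ i, gradient (f i) xstar, x - xstar⟫) := by
      rw [← Finset.mul_sum, Finset.sum_sub_distrib, Finset.sum_sub_distrib, sum_inner]
    rw [h2, hstar'] at hs
    simp only [inner_zero_left, sub_zero] at hs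
    have hmul := mul_le_mul_of_nonneg_left hs (le_of_lt (one_div_pos.2 hnR))
    calc (1/(n:ℝ)) * ∑ i, ‖g i‖ ^ 2
        ≤ (1/(n:ℝ)) * (2 * Lmax * (∑ i, f i x - ∑ i, f i xstar)) := hmul
      _ = 2 * Lmax * (F x - F xstar) := by rw [hF x, hF xstar]; ring
  rw [key]
  have P1 := mul_le_mul_of_nonneg_left hA (le_of_lt (by linarith : (0:ℝ) < 2 * gamma))
  have P2 := mul_le_mul_of_nonneg_left hQ (sq_nonneg gamma)
  nlinarith [P1, P2]
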